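/- Fix an integer r ≥ 2 and work in the representation of the Heisenberg operators J^a_k on the module M described in the context, with the operators W^{i}_k (i ∈ [r], k ∈ ℤ) defined by the quantum Miura recursion. Then for all 1 ≤ i ≤ r and all k ∈ ℤ one has the identity of K-linear operators on M: W^{i}_k = Σ_{γ ∈ Γ_{(0,k)→(i,0)}} Σ_{f} wt(γ,f), where f ranges over all strictly increasing functions [i] → [r], and the sum over paths is locally finite (for each element of M only finitely many summands act nonzero). (This is the combinatorial formula for the generators of the W-algebra W^k(gl_r), Lemma 3.4 of the paper.) -/

import Mathlib

open MvPolynomial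

noncomputable section Stmt4

/-- The parameters `ℏ, 𝔟, Λ` (first component) and `P_1,…,P_r`, `Q_0,…,Q_{r−2}`. -/
abbrev Vars (r : ℕ) : Type := Fin 3 ⊕ (Fin r ⊕ Fin (r - 1))

/-- The field `K = ℚ(ℏ, 𝔟, Λ, P_1,…,P_r, Q_0,…,Q_{r−2})`. -/
abbrev KK (r : ℕ) : Type := FractionRing (MvPolynomial (Vars r) ℚ)

/-- The module `M = K[x^a_k : a ∈ [r], k ≥ 1]` (the variable `(a, k)` stands for `x^a_k`;
indices outside `[r] × ℤ_{≥1}` are unused). -/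
abbrev MM (r : ℕ) : Type := MvPolynomial (ℕ × ℕ) (KK r)

/-- Embedding of parameter indeterminates into `K`. -/
def par (r : ℕ) (v : Vars r) : KK r := algebraMap (MvPolynomial (Vars r) ℚ) (KK r) (X v)

/-- `ℏ`. -/
def hb (r : ℕ) : KK r := par r (Sum.inl 0)

/-- `𝔟`. -/
def bb (r : ℕ) : KK r := par r (Sum.inl 1)

/-- `Λ`. -/
def Lam (r : ℕ) : KK r := par r (Sum.inl 2)

/-- `P_1, …, P_r` (zero-indexed). -/
def Pv (r : ℕ) (i : Fin r) : KK r := par r (Sum.inr (Sum.inl i))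

/-- `Q_0, …, Q_{r−2}` (indexed by `Fin (r−1)`; `Q_j = Qv ⟨j⟩`). -/
def Qv (r : ℕ) (j : Fin (r - 1)) : KK r := par r (Sum.inr (Sum.inr j))

/-- The scalar by which the zero mode `J^a_0` acts (for the 1-based index `a ∈ [r]`):
`Q_{a−1} − ℏ𝔟(a−1)` for `a ∈ [r−1]`, and
`−Σ_{a'=1}^{r} P_{a'} − Σ_{a'=0}^{r−2} Q_{a'} − ℏ𝔟(r−1)` for `a = r`. -/
def Jzero (r : ℕ) (a : ℕ) : KK r :=
  if h : 1 ≤ a ∧ a < r then Qv r ⟨a - 1, by omega⟩ - hb r * bb r * ((a - 1 : ℕ) : KK r)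
  else if a = r then
    -(∑ i : Fin r, Pv r i) - (∑ j : Fin (r - 1), Qv r j) - hb r * bb r * ((r - 1 : ℕ) : KK r)
  else 0

/-- The Heisenberg operators `J^a_k` on `M` (for the 1-based index `a ∈ [r]`):
`J^a_k = ℏ ∂_{x^a_k}` for `k > 0`;
`J^a_k = ℏ(−k)·x^a_{−k} + (−1)^r Λ^{−1} δ_{k,−1} δ_{a,r}` for `k < 0`;
and `J^a_0` is the scalar `Jzero r a`. -/
def Jop (r : ℕ) (a : ℕ) (k : ℤ) : MM r → MM r :=
  if 0 < k then fun p => C (hb r) * pderiv (a, k.toNat) p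
  else if k < 0 then fun p =>
    C (hb r * ((-k : ℤ) : KK r)) * X (a, (-k).toNat) * p +
      (if k = -1 ∧ a = r then C ((-1 : KK r) ^ r * (Lam r)⁻¹) * p else 0)
  else fun p => C (Jzero r a) * p

/-- The Miura operators `W^{i,s}_k` (recursion on `s`, the first explicit argument):
`W^{0,s}_k = δ_{k,0}·Id`, `W^{i,s}_k = 0` for `i > s`, and
`W^{i,s}_k = W^{i,s−1}_k + Σ_{k_1+k_2=k} (J^{r−s+1}_{k_1} − δ_{k_1,0} ℏ𝔟(k_2+i−1)) W^{i−1,s−1}_{k_2}`,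
the (locally finite) sum over `k_2 ∈ ℤ` being interpreted as a `finsum`. -/
def Wop (r : ℕ) : ℕ → ℕ → ℤ → MM r → MM r
  | 0, i, k => if i = 0 then (fun p => if k = 0 then p else 0) else 0
  | s + 1, i, k =>
      if i = 0 then (fun p => if k = 0 then p else 0)
      else if s + 1 < i then 0
      else fun p =>
        Wop r s i k p +
          ∑ᶠ k₂ : ℤ,
            (if k - k₂ = 0 then
                (fun q => Jop r (r - s) 0 q -
                  C (hb r * bb r * ((k₂ + (i : ℤ) - 1 : ℤ) : KK r)) * q)
              else Jop r (r - s) (k - k₂))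
              (Wop r s (i - 1) k₂ p)

/-- The set of paths from `(x, y)` to `(x + N, y')`, encoded as the list of the `N`
successive height increments. -/
def PathSet (y : ℤ) (N : ℕ) (y' : ℤ) : Set (List ℤ) :=
  {L | L.length = N ∧ y + L.sum = y'}

/-- The colored weight `wt(γ, f)` of a path of total length `N` ending at height `hN`,
processed from the left; the path is given as the list of pairs
(color of the step, height increment of the step). At (1-based) position `u` and current
height `y`, a non-flat step of increment `d` and color `c` contributes the operator
`J^c_{-d}` (i.e. `J^c_{h_{j-1}-h_j}`), while a flat step contributes
`J^c_0 − ℏ𝔟(h_j − h_N + N − j)`. The first step's operator is applied last. -/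
def wtCol (r : ℕ) (N : ℕ) (hN : ℤ) : ℕ → ℤ → List (ℕ × ℤ) → MM r → MM r
  | _, _, [] => id
  | u, y, (c, d) :: rest =>
      (if d = 0 then
          (fun p => Jop r c 0 p -
            C (hb r * bb r * ((y - hN + (N : ℤ) - (u : ℤ) : ℤ) : KK r)) * p)
        else Jop r c (-d)) ∘
        wtCol r N hN (u + 1) (y + d) rest

/-- The set of strictly increasing lists of length `j` with entries in `[lo..hi]`
(encoding strictly increasing functions `[j] → [lo..hi]`). -/
def IncLists (j lo hi : ℕ) : Set (List ℕ) :=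
  {ns | ns.length = j ∧ ns.Chain' (· < ·) ∧ ∀ c ∈ ns, lo ≤ c ∧ c ≤ hi}

/-!
Induct on the number `s` of Miura factors. The colourings of a path by colours in
`[r - s, r]` either avoid `r - s` or start with it; in the second case the first step has
colour `r - s`, and stripping it off (the remaining path starts at height `k₂`) reproduces the
sum over `k₂` in the Miura recursion.

All sums are locally finite because a lowering step `J^c_m`, `m > 0`, differentiates in
`x^c_m`, and the steps applied before it have larger colours, so they only create variables of
other colours: the variable must already occur in `p`. This bounds every step of a path with
nonzero weight from below, and, its endpoints being fixed, also from above.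
-/

namespace MvPolynomial

theorem pderiv_mem_supported {σ R : Type*} [CommSemiring R] {s : Set σ}
    {p : MvPolynomial σ R} (hp : p ∈ supported R s) (i : σ) : pderiv i p ∈ supported R s := by
  classical
  induction hp using Algebra.adjoin_induction with
  | mem x hx =>
    obtain ⟨j, -, rfl⟩ := hx
    rw [pderiv_X, Pi.single_apply]
    split_ifs
    · exact Subalgebra.one_mem _
    · exact Subalgebra.zero_mem _
  | algebraMap a => simp [algebraMap_eq]
  | add x y _ _ hx hy => simpa only [map_add] using add_mem hx hy
  | mul x y hxs hys hx hy =>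
    rw [pderiv_mul]
    exact add_mem (mul_mem hx hys) (mul_mem hxs hy)

end MvPolynomial

theorem List.finite_setOf_length_eq_forall_mem {α : Type*} {s : Set α} (hs : s.Finite)
    (n : ℕ) : {l : List α | l.length = n ∧ ∀ x ∈ l, x ∈ s}.Finite := by
  have := hs.to_subtype
  refine ((List.finite_length_eq s n).image (List.map (↑))).subset ?_
  rintro l ⟨rfl, hl⟩
  exact ⟨l.attachWith (· ∈ s) hl, by simp, by simp⟩

theorem List.sub_le_sum_sub_length_mul {l : List ℤ} {b : ℤ} (hl : ∀ x ∈ l, b ≤ x) {x : ℤ}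
    (hx : x ∈ l) : x - b ≤ l.sum - l.length * b := by
  have hsum : ∀ l' : List ℤ, (l'.map (· - b)).sum = l'.sum - l'.length * b := fun l' => by
    induction l' with
    | nil => simp
    | cons y l ih =>
      simp only [List.map_cons, List.sum_cons, ih, List.length_cons]
      push_cast
      ring
  rw [← hsum]
  exact List.single_le_sum (by simpa using hl) (x - b) (List.mem_map_of_mem hx)

theorem pathSet_zero (k : ℤ) :
    PathSet k 0 0 = if k = 0 then {([] : List ℤ)} else ∅ := by
  ext L
  split_ifs with hk <;> simp +contextual [PathSet, hk]

theorem pathSet_succ (k : ℤ) (j : ℕ) :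
    PathSet k (j + 1) 0
      = (fun x : ℤ × List ℤ => (x.1 - k) :: x.2) '' {x | x.2 ∈ PathSet x.1 j 0} := by
  ext L
  constructor
  · rintro ⟨hlen, hsum⟩
    obtain ⟨d, L', rfl⟩ := List.exists_cons_of_length_eq_add_one hlen
    refine ⟨(k + d, L'), ⟨by simpa using hlen, ?_⟩, by simp⟩
    simp only [List.sum_cons] at hsum ⊢
    omega
  · rintro ⟨⟨k₂, L'⟩, ⟨hlen, hsum⟩, rfl⟩
    exact ⟨by simpa using hlen, by simp only [List.sum_cons] at hsum ⊢; omega⟩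

theorem finsum_mem_pathSet_succ {M : Type*} [AddCommMonoid M] {k : ℤ} {j : ℕ}
    (F : List ℤ → M) (hF : (PathSet k (j + 1) 0 ∩ Function.support F).Finite) :
    ∑ᶠ L ∈ PathSet k (j + 1) 0, F L
      = ∑ᶠ (k₂ : ℤ), ∑ᶠ L' ∈ PathSet k₂ j 0, F ((k₂ - k) :: L') := by
  set g : ℤ × List ℤ → List ℤ := fun x => (x.1 - k) :: x.2
  set S : Set (ℤ × List ℤ) := {x | x.2 ∈ PathSet x.1 j 0}
  have hg : g.Injective := fun x y h => by
    simp only [g, List.cons.injEq, sub_left_inj] at h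
    exact Prod.ext h.1 h.2
  have hfin : (Function.support (S.indicator (F ∘ g))).Finite := by
    rw [Set.support_indicator]
    refine Set.Finite.of_finite_image ?_ hg.injOn
    refine hF.subset ?_
    rintro _ ⟨x, ⟨hxS, hx⟩, rfl⟩
    exact ⟨pathSet_succ k j ▸ ⟨x, hxS, rfl⟩, hx⟩
  rw [pathSet_succ, finsum_mem_image hg.injOn, finsum_mem_def]
  refine (finsum_curry _ hfin).trans ?_
  simp_rw [finsum_mem_def]
  rfl

theorem incLists_finite (j lo hi : ℕ) : (IncLists j lo hi).Finite :=
  (List.finite_setOf_length_eq_forall_mem (Set.finite_Icc lo hi) j).subset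
    fun _ ⟨hlen, _, hmem⟩ => ⟨hlen, hmem⟩

theorem incLists_zero (lo hi : ℕ) : IncLists 0 lo hi = {[]} := by
  ext cs
  constructor
  · rintro ⟨hlen, -, -⟩
    exact List.length_eq_zero_iff.mp hlen
  · rintro rfl
    exact ⟨rfl, List.isChain_nil, by simp⟩

theorem incLists_eq_empty {j lo hi : ℕ} (h : hi + 1 - lo < j) : IncLists j lo hi = ∅ := by
  refine Set.eq_empty_of_forall_notMem fun cs ⟨hlen, hchain, hmem⟩ => ?_
  have hsub : cs.toFinset ⊆ Finset.Icc lo hi := fun c hc =>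
    Finset.mem_Icc.mpr (hmem c (List.mem_toFinset.mp hc))
  have := Finset.card_le_card hsub
  rw [List.toFinset_card_of_nodup (List.isChain_iff_pairwise.mp hchain).nodup, hlen,
    Nat.card_Icc] at this
  omega

theorem incLists_succ {lo hi : ℕ} (hlo : lo ≤ hi) (j : ℕ) :
    IncLists (j + 1) lo hi
      = IncLists (j + 1) (lo + 1) hi ∪ List.cons lo '' IncLists j (lo + 1) hi := by
  ext cs
  constructor
  · rintro ⟨hlen, hchain, hmem⟩
    obtain ⟨c, cs', rfl⟩ := List.exists_cons_of_length_eq_add_one hlen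
    have hlt := (List.pairwise_cons.mp (List.isChain_iff_pairwise.mp hchain)).1
    have hc := hmem c List.mem_cons_self
    rcases eq_or_lt_of_le hc.1 with rfl | hc'
    · refine Or.inr ⟨cs', ⟨by simpa using hlen, hchain.tail, fun x hx => ?_⟩, rfl⟩
      exact ⟨hlt x hx, (hmem x (List.mem_cons_of_mem _ hx)).2⟩
    · refine Or.inl ⟨hlen, hchain, fun x hx => ⟨?_, (hmem x hx).2⟩⟩
      rcases List.mem_cons.mp hx with rfl | hx
      · exact hc'
      · exact hc'.trans (hlt x hx)
  · rintro (⟨hlen, hchain, hmem⟩ | ⟨cs', ⟨hlen, hchain, hmem⟩, rfl⟩)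
    · exact ⟨hlen, hchain, fun x hx => ⟨(hmem x hx).1.trans' (by omega), (hmem x hx).2⟩⟩
    · refine ⟨by simp [hlen], ?_, fun x hx => ?_⟩
      · refine List.isChain_iff_pairwise.mpr (List.pairwise_cons.mpr ⟨fun x hx => ?_, ?_⟩)
        · exact (hmem x hx).1
        · exact List.isChain_iff_pairwise.mp hchain
      · rcases List.mem_cons.mp hx with rfl | hx
        · exact ⟨le_rfl, hlo⟩
        · exact ⟨(hmem x hx).1.trans' (by omega), (hmem x hx).2⟩

theorem disjoint_incLists_succ (j lo hi : ℕ) :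
    Disjoint (IncLists (j + 1) (lo + 1) hi) (List.cons lo '' IncLists j (lo + 1) hi) := by
  rw [Set.disjoint_left]
  rintro _ ⟨-, -, hmem⟩ ⟨cs', -, rfl⟩
  have := (hmem lo List.mem_cons_self).1
  omega

/-- The operator of a step of colour `a`, as it occurs in both `wtCol` and `Wop`. -/
def stepHom (r a : ℕ) (m : ℤ) (t : KK r) : MM r →+ MM r where
  toFun q := if m = 0 then Jop r a 0 q - C (hb r * bb r * t) * q else Jop r a m q
  map_zero' := by unfold Jop; split_ifs <;> simp
  map_add' p q := by unfold Jop; split_ifs <;> simp only [mul_add, map_add] <;> ring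

def colourSum (r i lo : ℕ) (k : ℤ) (L : List ℤ) (p : MM r) : MM r :=
  ∑ᶠ cs ∈ IncLists i lo r, wtCol r i 0 1 k (cs.zip L) p

section

variable {r : ℕ}

theorem Jop_mem_supported {S : Set (ℕ × ℕ)} {q : MM r} (hq : q ∈ supported (KK r) S)
    (a : ℕ) (k : ℤ) : Jop r a k q ∈ supported (KK r) (S ∪ {w | w.1 = a}) := by
  have hq' := supported_mono (R := KK r) (t := S ∪ {w | w.1 = a}) Set.subset_union_left hq
  have hC : ∀ c : KK r, C c ∈ supported (KK r) (S ∪ {w | w.1 = a}) := fun c =>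
    Subalgebra.algebraMap_mem _ c
  have hX : ∀ m : ℕ, (X (a, m) : MM r) ∈ supported (KK r) (S ∪ {w | w.1 = a}) := fun m =>
    X_mem_supported.mpr (Or.inr rfl)
  unfold Jop
  split_ifs
  · exact mul_mem (hC _) (pderiv_mem_supported hq' _)
  · exact add_mem (mul_mem (mul_mem (hC _) (hX _)) hq') (mul_mem (hC _) hq')
  · exact add_mem (mul_mem (mul_mem (hC _) (hX _)) hq') (zero_mem _)
  · exact mul_mem (hC _) hq'

theorem Jop_eq_zero_of_notMem_vars {q : MM r} (a : ℕ) {k : ℤ} (hk : 0 < k)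
    (hv : (a, k.toNat) ∉ q.vars) : Jop r a k q = 0 := by
  simp [Jop, hk, pderiv_eq_zero_of_notMem_vars hv]

theorem stepHom_congr (a : ℕ) {m : ℤ} {t t' : KK r} (h : m = 0 → t = t') :
    stepHom r a m t = stepHom r a m t' := by
  by_cases hm : m = 0
  · rw [h hm]
  · ext q
    simp [stepHom, hm]

theorem stepHom_mem_supported {S : Set (ℕ × ℕ)} {q : MM r} (hq : q ∈ supported (KK r) S)
    (a : ℕ) (m : ℤ) (t : KK r) : stepHom r a m t q ∈ supported (KK r) (S ∪ {w | w.1 = a}) := by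
  simp only [stepHom, AddMonoidHom.coe_mk, ZeroHom.coe_mk]
  split_ifs
  · exact sub_mem (Jop_mem_supported hq a 0)
      (mul_mem (Subalgebra.algebraMap_mem _ _) (supported_mono Set.subset_union_left hq))
  · exact Jop_mem_supported hq a m

theorem stepHom_eq_zero_of_notMem_vars {q : MM r} (a : ℕ) {m : ℤ} (hm : 0 < m) (t : KK r)
    (hv : (a, m.toNat) ∉ q.vars) : stepHom r a m t q = 0 := by
  simp [stepHom, hm.ne', Jop_eq_zero_of_notMem_vars a hm hv]


theorem wtCol_cons (N : ℕ) (hN : ℤ) (u : ℕ) (y : ℤ) (c : ℕ) (d : ℤ) (l : List (ℕ × ℤ))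
    (p : MM r) :
    wtCol r N hN u y ((c, d) :: l) p
      = stepHom r c (-d) ((y - hN + N - u : ℤ) : KK r) (wtCol r N hN (u + 1) (y + d) l p) := by
  simp only [wtCol, Function.comp_apply, stepHom, AddMonoidHom.coe_mk, ZeroHom.coe_mk,
    neg_eq_zero]
  split_ifs <;> rfl

theorem wtCol_succ_succ (N : ℕ) (hN : ℤ) (l : List (ℕ × ℤ)) (u : ℕ) (y : ℤ) (p : MM r) :
    wtCol r (N + 1) hN (u + 1) y l p = wtCol r N hN u y l p := by
  induction l generalizing u y with
  | nil => rfl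
  | cons x l ih =>
    rw [wtCol_cons, wtCol_cons, ih]
    congr 3
    push_cast
    ring

theorem wtCol_mem_supported (N : ℕ) (hN : ℤ) (l : List (ℕ × ℤ)) (u : ℕ) (y : ℤ) (p : MM r) :
    wtCol r N hN u y l p ∈ supported (KK r) (↑p.vars ∪ {w | w.1 ∈ l.map Prod.fst}) := by
  induction l generalizing u y with
  | nil => exact supported_mono Set.subset_union_left (mem_supported_vars p)
  | cons x l ih =>
    rw [wtCol_cons]
    refine supported_mono ?_ (stepHom_mem_supported (ih (u + 1) (y + x.2)) _ _ _)
    rintro w ((hw | hw) | hw)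
    · exact Or.inl hw
    · exact Or.inr (List.mem_cons_of_mem _ hw)
    · exact Or.inr (List.mem_cons.mpr (Or.inl hw))

theorem neg_sup_vars_le_of_wtCol_ne_zero {N : ℕ} {hN : ℤ} {p : MM r} {cs : List ℕ}
    (hcs : cs.Pairwise (· < ·)) {L : List ℤ} (hlen : cs.length = L.length) {u : ℕ} {y : ℤ}
    (h : wtCol r N hN u y (cs.zip L) p ≠ 0) :
    ∀ d ∈ L, -((p.vars.sup Prod.snd : ℕ) : ℤ) ≤ d := by
  induction cs generalizing L u y with
  | nil => simp_all [eq_comm (a := 0), List.length_eq_zero_iff]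
  | cons c cs ih =>
    obtain ⟨d, L, rfl⟩ := List.exists_cons_of_length_eq_add_one hlen.symm
    rw [List.zip_cons_cons, wtCol_cons] at h
    have hrest : wtCol r N hN (u + 1) (y + d) (cs.zip L) p ≠ 0 := fun h0 => h (by simp [h0])
    have hc := List.pairwise_cons.mp hcs
    refine List.forall_mem_cons.mpr ⟨?_, ih hc.2 (by simpa using hlen) hrest⟩
    by_contra! hd
    refine h (stepHom_eq_zero_of_notMem_vars c (by omega) _ fun hv => ?_)
    rcases mem_supported.mp (wtCol_mem_supported _ _ _ _ _ p) hv with hv | hv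
    · have := Finset.le_sup (f := Prod.snd) hv
      omega
    · rw [List.map_fst_zip (by simpa using hlen.le)] at hv
      exact lt_irrefl c (hc.1 c hv)

theorem colourSum_zero (lo : ℕ) (k : ℤ) (L : List ℤ) (p : MM r) :
    colourSum r 0 lo k L p = p := by
  rw [colourSum, incLists_zero, finsum_mem_singleton]
  rfl

theorem colourSum_eq_zero_of_lt {i lo : ℕ} (h : r + 1 - lo < i) (k : ℤ) (L : List ℤ)
    (p : MM r) : colourSum r i lo k L p = 0 := by
  rw [colourSum, incLists_eq_empty h, finsum_mem_empty]

theorem finite_pathSet_inter_support_colourSum (i lo : ℕ) (k : ℤ) (p : MM r) :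
    (PathSet k i 0 ∩ Function.support fun L => colourSum r i lo k L p).Finite := by
  set B : ℤ := ((p.vars.sup Prod.snd : ℕ) : ℤ)
  refine (List.finite_setOf_length_eq_forall_mem (Set.finite_Icc (-B) (-k + i * B)) i).subset
    ?_
  rintro L ⟨⟨hlen, hsum⟩, hL⟩
  obtain ⟨cs, ⟨hcs, hchain, -⟩, hne⟩ := exists_ne_zero_of_finsum_mem_ne_zero hL
  have hB := neg_sup_vars_le_of_wtCol_ne_zero (List.isChain_iff_pairwise.mp hchain)
    (hcs.trans hlen.symm) hne
  refine ⟨hlen, fun d hd => ⟨hB d hd, ?_⟩⟩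
  have := List.sub_le_sum_sub_length_mul hB hd
  rw [hlen] at this
  have : 0 ≤ B := Int.natCast_nonneg _
  linarith

theorem colourSum_succ {lo : ℕ} (hlo : lo ≤ r) (j : ℕ) (k : ℤ) (L : List ℤ) (p : MM r) :
    colourSum r (j + 1) lo k L p = colourSum r (j + 1) (lo + 1) k L p +
      ∑ᶠ cs ∈ IncLists j (lo + 1) r, wtCol r (j + 1) 0 1 k ((lo :: cs).zip L) p := by
  rw [colourSum, incLists_succ hlo, finsum_mem_union (disjoint_incLists_succ j lo r)
    (incLists_finite _ _ _) ((incLists_finite _ _ _).image _),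
    finsum_mem_image (List.cons_injective.injOn)]
  rfl

theorem colourSum_cons_sub {lo : ℕ} (hlo : lo ≤ r) (j : ℕ) (k k₂ : ℤ) (L : List ℤ)
    (p : MM r) :
    colourSum r (j + 1) lo k ((k₂ - k) :: L) p -
        colourSum r (j + 1) (lo + 1) k ((k₂ - k) :: L) p
      = stepHom r lo (k - k₂) ((k₂ + j : ℤ) : KK r) (colourSum r j (lo + 1) k₂ L p) := by
  rw [colourSum_succ hlo, add_sub_cancel_left, colourSum,
    AddMonoidHom.map_finsum_mem' _ ((incLists_finite _ _ _).inter_of_left _)]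
  refine finsum_mem_congr rfl fun cs _ => ?_
  rw [List.zip_cons_cons, wtCol_cons, wtCol_succ_succ, neg_sub, add_sub_cancel]
  exact DFunLike.congr_fun (stepHom_congr _ fun h => by
    obtain rfl : k₂ = k := by omega
    push_cast
    ring) _

theorem finsum_pathSet_colourSum_zero (lo : ℕ) (k : ℤ) (p : MM r) :
    ∑ᶠ L ∈ PathSet k 0 0, colourSum r 0 lo k L p = if k = 0 then p else 0 := by
  rw [pathSet_zero]
  split_ifs
  · rw [finsum_mem_singleton, colourSum_zero]
  · rw [finsum_mem_empty]

theorem finsum_pathSet_colourSum_succ {lo : ℕ} (hlo : lo ≤ r) (j : ℕ) (k : ℤ) (p : MM r) :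
    ∑ᶠ L ∈ PathSet k (j + 1) 0, colourSum r (j + 1) lo k L p
      = ∑ᶠ L ∈ PathSet k (j + 1) 0, colourSum r (j + 1) (lo + 1) k L p +
        ∑ᶠ k₂ : ℤ, stepHom r lo (k - k₂) ((k₂ + j : ℤ) : KK r)
          (∑ᶠ L ∈ PathSet k₂ j 0, colourSum r j (lo + 1) k₂ L p) := by
  set F : List ℤ → MM r := fun L =>
    colourSum r (j + 1) lo k L p - colourSum r (j + 1) (lo + 1) k L p
  have hA := finite_pathSet_inter_support_colourSum (j + 1) (lo + 1) k p
  have hF : (PathSet k (j + 1) 0 ∩ Function.support F).Finite := by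
    refine ((finite_pathSet_inter_support_colourSum (j + 1) lo k p).union hA).subset ?_
    rintro L ⟨hL, hF⟩
    rcases Function.support_sub _ _ hF with h | h
    exacts [Or.inl ⟨hL, h⟩, Or.inr ⟨hL, h⟩]
  calc ∑ᶠ L ∈ PathSet k (j + 1) 0, colourSum r (j + 1) lo k L p
      = ∑ᶠ L ∈ PathSet k (j + 1) 0, colourSum r (j + 1) (lo + 1) k L p +
          ∑ᶠ L ∈ PathSet k (j + 1) 0, F L := by
        rw [← finsum_mem_add_distrib' hA hF]
        simp only [F, add_sub_cancel]
    _ = _ := by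
        rw [finsum_mem_pathSet_succ F hF]
        congr 1
        refine finsum_congr fun k₂ => ?_
        rw [AddMonoidHom.map_finsum_mem' _ (finite_pathSet_inter_support_colourSum _ _ _ _)]
        exact finsum_mem_congr rfl fun L _ => colourSum_cons_sub hlo j k k₂ L p

theorem Wop_zero (s : ℕ) (k : ℤ) (p : MM r) : Wop r s 0 k p = if k = 0 then p else 0 := by
  cases s <;> rfl

theorem Wop_eq_zero_of_lt {s i : ℕ} (h : s < i) (k : ℤ) (p : MM r) : Wop r s i k p = 0 := by
  cases s with
  | zero => simp [Wop, show i ≠ 0 by omega]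
  | succ s => simp [Wop, show i ≠ 0 by omega, h]

theorem Wop_succ_succ {s j : ℕ} (h : j ≤ s) (k : ℤ) (p : MM r) :
    Wop r (s + 1) (j + 1) k p = Wop r s (j + 1) k p +
      ∑ᶠ k₂ : ℤ, stepHom r (r - s) (k - k₂) ((k₂ + j : ℤ) : KK r) (Wop r s j k₂ p) := by
  simp only [Wop, Nat.add_one_ne_zero, if_false, show ¬s + 1 < j + 1 by omega,
    Nat.add_sub_cancel, stepHom, AddMonoidHom.coe_mk, ZeroHom.coe_mk]
  congr 1
  refine finsum_congr fun k₂ => ?_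
  rw [show k₂ + ((j + 1 : ℕ) : ℤ) - 1 = k₂ + j by push_cast; ring]
  split_ifs <;> rfl

theorem Wop_eq_finsum_pathSet_colourSum {s : ℕ} (hs : s ≤ r) (i : ℕ) (k : ℤ) (p : MM r) :
    Wop r s i k p = ∑ᶠ L ∈ PathSet k i 0, colourSum r i (r - s + 1) k L p := by
  induction s generalizing i k with
  | zero =>
    rcases i with _ | j
    · rw [Wop_zero, finsum_pathSet_colourSum_zero]
    · rw [Wop_eq_zero_of_lt j.succ_pos, finsum_mem_eq_zero_of_forall_eq_zero fun L _ =>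
        colourSum_eq_zero_of_lt (by omega) k L p]
  | succ s ih =>
    rcases i with _ | j
    · rw [Wop_zero, finsum_pathSet_colourSum_zero]
    by_cases hj : s < j
    · rw [Wop_eq_zero_of_lt (by omega), finsum_mem_eq_zero_of_forall_eq_zero fun L _ =>
        colourSum_eq_zero_of_lt (by omega) k L p]
    rw [Wop_succ_succ (by omega), show r - (s + 1) + 1 = r - s by omega,
      finsum_pathSet_colourSum_succ (by omega), ih (by omega)]
    congr 1
    exact finsum_congr fun k₂ => by rw [ih (by omega)]

end

theorem stmt4_general (r : ℕ) (i : ℕ) (k : ℤ) :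
    (∀ p : MM r,
        {L ∈ PathSet k i 0 |
          (∑ᶠ cs ∈ IncLists i 1 r, wtCol r i 0 1 k (cs.zip L) p) ≠ 0}.Finite) ∧
    (∀ p : MM r,
        Wop r r i k p
          = ∑ᶠ L ∈ PathSet k i 0, ∑ᶠ cs ∈ IncLists i 1 r, wtCol r i 0 1 k (cs.zip L) p) := by
  refine ⟨fun p => finite_pathSet_inter_support_colourSum i 1 k p, fun p => ?_⟩
  rw [Wop_eq_finsum_pathSet_colourSum le_rfl, Nat.sub_self]
  rfl

/-- **Lemma 3.4 of the paper** (the combinatorial formula for the generators of the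
`W`-algebra `W^k(gl_r)`). For `r ≥ 2`, `1 ≤ i ≤ r` and `k ∈ ℤ`, one has the identity of
`K`-linear operators on `M`:
`W^i_k = Σ_{γ ∈ Γ_{(0,k)→(i,0)}} Σ_{f : [i] → [r] strictly increasing} wt(γ, f)`,
and the sum over paths is locally finite. -/
theorem stmt4 (r : ℕ) (hr : 2 ≤ r) (i : ℕ) (hi1 : 1 ≤ i) (hi2 : i ≤ r) (k : ℤ) :
    (∀ p : MM r,
        {L ∈ PathSet k i 0 |
          (∑ᶠ cs ∈ IncLists i 1 r, wtCol r i 0 1 k (cs.zip L) p) ≠ 0}.Finite) ∧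
    (∀ p : MM r,
        Wop r r i k p
          = ∑ᶠ L ∈ PathSet k i 0, ∑ᶠ cs ∈ IncLists i 1 r, wtCol r i 0 1 k (cs.zip L) p) :=
  stmt4_general r i k

end Stmt4
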